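/- arXiv:2002.03618 — 8 statements merged into one kernel-verified Lean document; each statement's English description precedes it below -/
import Mathlib

section
/- Let X be a T1 topological space. Then X is regular if and only if every point x ∈ X has an open neighborhood U_x such that there exist disjoint open sets W_x and V_x of X with x ∈ W_x and X \ U_x ⊆ V_x, and U_x with the subspace topology is a regular space. -/
open Topology Filter


/-- **Regularity criterion** (topological version of Lemma C.4): a `T₁` space is regular
iff every point has an open neighborhood `U` which can be separated from the point by
disjoint open sets (`x ∈ W`, `Uᶜ ⊆ V`) and which is regular in the subspace topology. -/
theorem stmt0 (X : Type*) [TopologicalSpace X] [T1Space X] :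
    RegularSpace X ↔
      ∀ x : X, ∃ U : Set X, IsOpen U ∧ x ∈ U ∧
        (∃ W V : Set X, IsOpen W ∧ IsOpen V ∧ Disjoint W V ∧ x ∈ W ∧ Uᶜ ⊆ V) ∧
        RegularSpace U := by
  constructor
  · intro hreg x
    refine ⟨Set.univ, isOpen_univ, trivial,
      ⟨Set.univ, ∅, isOpen_univ, isOpen_empty, Set.disjoint_empty _, trivial, by simp⟩,
      inferInstance⟩
  · intro h
    rw [regularSpace_iff]
    intro s a hs has
    obtain ⟨U, hUopen, haU, ⟨W, V, hWopen, hVopen, hWV, haW, hUcV⟩, hUreg⟩ := h a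
    -- separate a from s ∩ U inside the regular subspace U
    have hs' : IsClosed ((Subtype.val : U → X) ⁻¹' s) := hs.preimage continuous_subtype_val
    haveI := hUreg
    have has' : Disjoint (𝓝ˢ ((Subtype.val : U → X) ⁻¹' s)) (𝓝 (⟨a, haU⟩ : U)) := by
      rw [disjoint_nhdsSet_nhds, hs'.closure_eq]
      simpa using has
    obtain ⟨B, ⟨hBopen, hsB⟩, A, ⟨haA, hAopen⟩, hAB⟩ :=
      ((hasBasis_nhdsSet _).disjoint_iff (nhds_basis_opens _)).mp has'
    obtain ⟨B₀, hB₀open, hB₀⟩ := isOpen_induced_iff.mp hBopen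
    obtain ⟨A₀, hA₀open, hA₀⟩ := isOpen_induced_iff.mp hAopen
    -- open sets in X: s ⊆ (B₀ ∩ U) ∪ V, a ∈ A₀ ∩ U ∩ W, disjoint
    have hsub : s ⊆ (B₀ ∩ U) ∪ V := by
      intro y hy
      by_cases hyU : y ∈ U
      · exact Or.inl ⟨by
          have := hsB (show (⟨y, hyU⟩ : U) ∈ _ from hy)
          rwa [← hB₀] at this, hyU⟩
      · exact Or.inr (hUcV hyU)
    have hamem : a ∈ A₀ ∩ U ∩ W := by
      refine ⟨⟨?_, haU⟩, haW⟩
      have := haA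
      rw [← hA₀] at this
      exact this
    have hdisj : Disjoint ((B₀ ∩ U) ∪ V) (A₀ ∩ U ∩ W) := by
      rw [Set.disjoint_union_left]
      constructor
      · rw [Set.disjoint_left]
        rintro y ⟨hyB, hyU⟩ ⟨⟨hyA, _⟩, _⟩
        have hmemB : (⟨y, hyU⟩ : U) ∈ B := by rw [← hB₀]; exact hyB
        have hmemA : (⟨y, hyU⟩ : U) ∈ A := by rw [← hA₀]; exact hyA
        exact Set.disjoint_left.mp hAB hmemB hmemA
      · exact (hWV.symm.mono_right (Set.inter_subset_right)).symm.symm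
    exact Filter.disjoint_of_disjoint_of_mem hdisj
      (((hB₀open.inter hUopen).union hVopen).mem_nhdsSet.mpr hsub)
      (((hA₀open.inter hUopen).inter hWopen).mem_nhds hamem)
end

section
/- Let X be a T1 topological space such that every point has an open neighborhood which is completely regular in the subspace topology. Then X is completely regular if and only if X is regular. -/
/-!
For `x ∉ K` with `K` closed, regularity gives a closed neighbourhood
`t` of `x` inside `U \ K`, where `U` is a completely regular open neighbourhood of `x`. A function
on `U` separating `x` from `U \ interior t` equals `1` off `t`, so extending it by `1` outside `U`
gives a continuous function on the whole space.
-/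

open Set Topology Function

theorem IsOpen.continuous_val_extend_one {X β : Type*} [TopologicalSpace X] [TopologicalSpace β]
    [One β] {U t : Set X} (hU : IsOpen U) (ht : IsClosed t) (htU : t ⊆ U) {f : U → β}
    (hf : Continuous f) (hsupp : Subtype.val '' mulSupport f ⊆ t) :
    Continuous (Subtype.val.extend f 1) := by
  have htsupp : mulTSupport (Subtype.val.extend f 1) ⊆ t :=
    ht.closure_subset_iff.mpr (mulSupport_extend_one_subset.trans hsupp)
  refine continuous_of_mulTSupport fun x hx ↦ ?_
  lift x to U using htU (htsupp hx)
  rw [← hU.isOpenEmbedding_subtypeVal.continuousAt_iff, extend_comp Subtype.val_injective]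
  exact hf.continuousAt

theorem CompletelyRegularSpace.of_regularSpace_of_isOpen_nhds {X : Type*} [TopologicalSpace X]
    [RegularSpace X] (h : ∀ x : X, ∃ U : Set X, IsOpen U ∧ x ∈ U ∧ CompletelyRegularSpace U) :
    CompletelyRegularSpace X := by
  refine ⟨fun x K hK hxK ↦ ?_⟩
  obtain ⟨U, hU, hxU, hUcr⟩ := h x
  obtain ⟨t, htx, ht, htUK⟩ := exists_mem_nhds_isClosed_subset
    (Filter.inter_mem (hU.mem_nhds hxU) (hK.isOpen_compl.mem_nhds hxK))
  obtain ⟨g, hg, hgx, hg1⟩ := CompletelyRegularSpace.completely_regular (X := U) ⟨x, hxU⟩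
    (Subtype.val ⁻¹' (interior t)ᶜ)
    (isOpen_interior.preimage continuous_subtype_val).isClosed_compl
    (by simpa using mem_interior_iff_mem_nhds.mpr htx)
  have hsupp : Subtype.val '' mulSupport g ⊆ t := by
    rintro _ ⟨y, hy, rfl⟩
    by_contra hyt
    exact hy (hg1 fun hyt' ↦ hyt (interior_subset hyt'))
  refine ⟨Subtype.val.extend g 1,
    hU.continuous_val_extend_one ht (fun y hy ↦ (htUK hy).1) hg hsupp, ?_, fun y hyK ↦ ?_⟩
  · exact (Subtype.val_injective.extend_apply g 1 ⟨x, hxU⟩).trans hgx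
  · by_contra hy
    exact (htUK (hsupp (mulSupport_extend_one_subset hy))).2 hyK

theorem stmt1_general (X : Type*) [TopologicalSpace X]
    (h : ∀ x : X, ∃ U : Set X, IsOpen U ∧ x ∈ U ∧ CompletelyRegularSpace U) :
    CompletelyRegularSpace X ↔ RegularSpace X :=
  ⟨fun _ ↦ inferInstance, fun _ ↦ .of_regularSpace_of_isOpen_nhds h⟩

/-- A `T₁` space in which every point has a completely regular open neighborhood is
completely regular iff it is regular. -/
theorem stmt1 (X : Type*) [TopologicalSpace X] [T1Space X]
    (h : ∀ x : X, ∃ U : Set X, IsOpen U ∧ x ∈ U ∧ CompletelyRegularSpace U) :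
    CompletelyRegularSpace X ↔ RegularSpace X :=
  stmt1_general X h
end

section
/- Let X be a Lindelöf T1 topological space. Then every open cover of X admits a subordinate locally finite continuous partition of unity if and only if X is completely regular. -/
universe u

open Set Function



theorem paracompact_of_regular_lindelof {X : Type u} [TopologicalSpace X] [RegularSpace X]
    [LindelofSpace X] : ParacompactSpace X := by
  constructor
  intro α s ho hcov
  cases isEmpty_or_nonempty X with
  | inl h =>
    exact ⟨PEmpty, fun b => b.elim, fun b => b.elim, by simp [eq_empty_of_isEmpty],
      fun x => (h.false x).elim, fun b => b.elim⟩
  | inr h =>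
    classical
    -- choose for each x an index and two nested shrinkings
    have hx : ∀ x : X, ∃ a, x ∈ s a := fun x => by
      have := hcov ▸ mem_univ x; simpa using this
    choose ind hind using hx
    have hV : ∀ x : X, ∃ C : Set X, C ∈ nhds x ∧ IsClosed C ∧ C ⊆ s (ind x) := fun x =>
      exists_mem_nhds_isClosed_subset ((ho (ind x)).mem_nhds (hind x))
    choose C hCmem hCcl hCsub using hV
    set V : X → Set X := fun x => interior (C x) with hVdef
    have hVmem : ∀ x, x ∈ V x := fun x => mem_interior_iff_mem_nhds.2 (hCmem x)
    have hVsub : ∀ x, closure (V x) ⊆ s (ind x) := fun x => by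
      calc closure (V x) ⊆ closure (C x) := closure_mono interior_subset
        _ = C x := (hCcl x).closure_eq
        _ ⊆ s (ind x) := hCsub x
    have hB : ∀ x : X, ∃ D : Set X, D ∈ nhds x ∧ IsClosed D ∧ D ⊆ V x := fun x =>
      exists_mem_nhds_isClosed_subset (isOpen_interior.mem_nhds (hVmem x))
    choose D hDmem hDcl hDsub using hB
    set B : X → Set X := fun x => interior (D x) with hBdef
    have hBmem : ∀ x, x ∈ B x := fun x => mem_interior_iff_mem_nhds.2 (hDmem x)
    have hBsub : ∀ x, closure (B x) ⊆ V x := fun x => by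
      calc closure (B x) ⊆ closure (D x) := closure_mono interior_subset
        _ = D x := (hDcl x).closure_eq
        _ ⊆ V x := hDsub x
    -- countable subcover by the B's
    obtain ⟨c, hc⟩ := isLindelof_univ.indexed_countable_subcover (fun x => B x)
      (fun x => isOpen_interior) (fun x _ => mem_iUnion.2 ⟨x, hBmem x⟩)
    -- the locally finite refinement
    set W : ℕ → Set X := fun n => V (c n) \ ⋃ m ∈ Finset.range n, closure (B (c m)) with hWdef
    have hWopen : ∀ n, IsOpen (W n) :=
      fun n => isOpen_interior.sdiff (isClosed_biUnion_finset fun m _ => isClosed_closure)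
    have hWcov : ∀ x : X, ∃ n, x ∈ W n := by
      intro x
      have hex : ∃ n, x ∈ closure (B (c n)) := by
        obtain ⟨n, hn⟩ := mem_iUnion.1 (hc (mem_univ x))
        exact ⟨n, subset_closure hn⟩
      let n₀ := Nat.find hex
      refine ⟨n₀, hBsub _ (Nat.find_spec hex), ?_⟩
      simp only [mem_iUnion, Finset.mem_range, not_exists]
      intro m hm
      exact Nat.find_min hex hm
    have hWfin : LocallyFinite W := by
      intro x
      obtain ⟨k, hk⟩ := mem_iUnion.1 (hc (mem_univ x))
      refine ⟨B (c k), isOpen_interior.mem_nhds hk, (Set.finite_Iic k).subset ?_⟩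
      rintro n ⟨y, hyW, hyB⟩
      by_contra hn
      rw [mem_Iic, not_le] at hn
      exact hyW.2 (mem_biUnion (Finset.mem_range.2 hn) (subset_closure hyB))
    refine ⟨ULift ℕ, fun n => W n.down, fun n => hWopen n.down, ?_, ?_, ?_⟩
    · rw [eq_univ_iff_forall]
      intro x
      obtain ⟨n, hn⟩ := hWcov x
      exact mem_iUnion.2 ⟨⟨n⟩, hn⟩
    · intro x
      obtain ⟨t, ht, hfin⟩ := hWfin x
      exact ⟨t, ht, (hfin.preimage (ULift.down_injective.injOn)).subset
        (fun n hn => by exact hn)⟩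
    · intro n
      exact ⟨ind (c n.down), fun y hy => hVsub _ (subset_closure hy.1)⟩




/-- A Lindelöf `T₁` space admits a subordinate (locally finite, continuous) partition of
unity for every open cover iff it is completely regular. -/
theorem stmt2 {X : Type u} [TopologicalSpace X] [T1Space X] [LindelofSpace X] :
    (∀ (ι : Type u) (U : ι → Set X), (∀ i, IsOpen (U i)) → (⋃ i, U i) = Set.univ →
      ∃ f : PartitionOfUnity ι X Set.univ, f.IsSubordinate U) ↔
      CompletelyRegularSpace X := by
  constructor
  · intro h
    constructor
    intro x K hK hxK
    set U : ULift.{u} Bool → Set X := fun b => if b.down then Kᶜ else {x}ᶜ with hU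
    have hUo : ∀ b, IsOpen (U b) := by
      rintro ⟨b⟩
      cases b <;> simp [hU, hK.isOpen_compl, isOpen_compl_singleton, isClosed_singleton]
    have hUcov : (⋃ b, U b) = univ := by
      rw [eq_univ_iff_forall]
      intro y
      rcases eq_or_ne y x with rfl | hy
      · exact mem_iUnion.2 ⟨⟨true⟩, by simpa [hU] using hxK⟩
      · exact mem_iUnion.2 ⟨⟨false⟩, by simpa [hU] using hy⟩
    obtain ⟨f, hf⟩ := h _ U hUo hUcov
    have hsum : ∀ y : X, ∑ᶠ i, f i y = f ⟨true⟩ y + f ⟨false⟩ y := by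
      intro y
      rw [finsum_eq_sum_of_fintype, ← Equiv.sum_comp (Equiv.ulift (α := Bool)).symm
        (fun i => f i y), Fintype.sum_bool]
      rfl
    have hle : ∀ y, f ⟨false⟩ y ≤ 1 := by
      intro y
      have := f.sum_le_one y
      rw [hsum y] at this
      nlinarith [f.nonneg ⟨true⟩ y]
    refine ⟨fun y => ⟨f ⟨false⟩ y, f.nonneg _ y, hle y⟩,
      Continuous.subtype_mk (f ⟨false⟩).continuous _, ?_, ?_⟩
    · have hx0 : f ⟨false⟩ x = 0 := by
        apply image_eq_zero_of_notMem_tsupport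
        intro hmem
        have := hf ⟨false⟩ hmem
        simp [hU] at this
      exact Subtype.ext hx0
    · intro k hk
      have h0 : f ⟨true⟩ k = 0 := by
        apply image_eq_zero_of_notMem_tsupport
        intro hmem
        exact (hf ⟨true⟩ hmem) hk
      have h1 := f.sum_eq_one (mem_univ k)
      rw [hsum k, h0, zero_add] at h1
      exact Subtype.ext h1
  · intro h
    intro ι U hUo hUcov
    haveI : RegularSpace X := inferInstance
    haveI : ParacompactSpace X := paracompact_of_regular_lindelof
    exact PartitionOfUnity.exists_isSubordinate isClosed_univ U hUo (hUcov ▸ subset_rfl)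
end

section
/- Let X be a T1 topological space. Call a space 'numerably paracompact' if every open cover admits a subordinate continuous partition of unity, and 'hereditarily numerably paracompact' if every open subspace is numerably paracompact. Then X is hereditarily numerably paracompact if and only if X is numerably paracompact and every point of X has a hereditarily numerably paracompact open neighborhood. -/
universe u

/-- A space is *numerably paracompact* if every open cover admits a subordinate
(locally finite, continuous) partition of unity. -/
def NumerablyParacompact (Y : Type u) [TopologicalSpace Y] : Prop :=
  ∀ (ι : Type u) (U : ι → Set Y), (∀ i, IsOpen (U i)) → (⋃ i, U i) = Set.univ →
    ∃ f : PartitionOfUnity ι Y Set.univ, f.IsSubordinate U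

/-- A space is *hereditarily numerably paracompact* if every open subspace is
numerably paracompact. -/
def HeredNumerablyParacompact (Y : Type u) [TopologicalSpace Y] : Prop :=
  ∀ V : Set Y, IsOpen V → NumerablyParacompact V

/-!
Let `V` be open in `X` and `U` an open cover of `V`. Take a partition of unity `ψ` on `X`
subordinate to hereditarily numerably paracompact open neighbourhoods `W x`. Each `V ∩ W x` is
open in `W x`, so it carries a partition of unity `φ x` subordinate to the trace of `U`; then
`i ↦ ∑ₓ ψ x · φ x i` is a partition of unity on `V` subordinate to `U`. Each product, extended by
zero outside `W x`, is continuous because `tsupport (ψ x) ⊆ W x`, and local finiteness of the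
double family comes from that of `ψ` together with that of each `φ x`.
-/

open Set Function Topology

theorem finsum_comm_of_finite_support {α β M : Type*} [AddCommMonoid M] {f : α → β → M}
    (hf : (support (uncurry f)).Finite) :
    ∑ᶠ a, ∑ᶠ b, f a b = ∑ᶠ b, ∑ᶠ a, f a b := by
  have hswap : (support (uncurry (flip f))).Finite :=
    hf.preimage (Equiv.prodComm β α).injective.injOn
  calc ∑ᶠ a, ∑ᶠ b, f a b = ∑ᶠ p : α × β, uncurry f p := (finsum_curry _ hf).symm
    _ = ∑ᶠ p : β × α, uncurry (flip f) p := (finsum_comp_equiv (Equiv.prodComm β α)).symm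
    _ = ∑ᶠ b, ∑ᶠ a, f a b := finsum_curry _ hswap

theorem LocallyFinite.prod_of_subset {Y κ ι : Type*} [TopologicalSpace Y] {f : κ → Set Y}
    {g : κ → ι → Set Y} (hf : LocallyFinite f) (hg : ∀ k, LocallyFinite (g k))
    (hgf : ∀ k i, g k i ⊆ f k) : LocallyFinite fun p : κ × ι => g p.1 p.2 := by
  intro y
  obtain ⟨N, hN, hK⟩ := hf y
  choose M hM hI using fun k => hg k y
  refine ⟨N ∩ ⋂ k ∈ {k | (f k ∩ N).Nonempty}, M k,
    Filter.inter_mem hN ((Filter.biInter_mem hK).2 fun k _ => hM k),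
    (hK.biUnion fun k _ => (hI k).image (Prod.mk k)).subset ?_⟩
  rintro ⟨k, i⟩ ⟨z, hzg, hzN, hzM⟩
  have hk : (f k ∩ N).Nonempty := ⟨z, hgf k i hzg, hzN⟩
  exact mem_biUnion hk ⟨i, ⟨z, hzg, mem_iInter₂.1 hzM k hk⟩, rfl⟩

theorem support_finsum_subset {Y κ M : Type*} [AddCommMonoid M] (f : κ → Y → M) :
      support (fun y => ∑ᶠ k, f k y) ⊆ ⋃ k, support (f k) := fun _ hy =>
  mem_iUnion.2 (not_forall.1 fun h => hy (finsum_eq_zero_of_forall_eq_zero h))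

theorem LocallyFinite.iUnion_fst {Y κ ι : Type*} [TopologicalSpace Y] {F : κ × ι → Set Y}
    (hF : LocallyFinite F) : LocallyFinite fun i => ⋃ k, F (k, i) := by
  intro y
  obtain ⟨N, hN, hP⟩ := hF y
  refine ⟨N, hN, (hP.image Prod.snd).subset ?_⟩
  rintro i ⟨z, hz, hzN⟩
  obtain ⟨k, hk⟩ := mem_iUnion.1 hz
  exact ⟨(k, i), ⟨z, hk, hzN⟩, rfl⟩

namespace PartitionOfUnity

variable {Y Z ι κ : Type*} [TopologicalSpace Y] [TopologicalSpace Z]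

def comap (f : C(Z, Y)) (ρ : PartitionOfUnity ι Y univ) : PartitionOfUnity ι Z univ where
  toFun i := (ρ i).comp f
  locallyFinite' := ρ.locallyFinite.preimage_continuous f.continuous
  nonneg' i z := ρ.nonneg i (f z)
  sum_eq_one' z _ := ρ.sum_eq_one (mem_univ (f z))
  sum_le_one' z := ρ.sum_le_one (f z)

theorem IsSubordinate.comap {ρ : PartitionOfUnity ι Y univ} {U : ι → Set Y}
    (hρ : ρ.IsSubordinate U) (f : C(Z, Y)) : (ρ.comap f).IsSubordinate fun i => f ⁻¹' U i :=
  fun i => (tsupport_comp_subset_preimage (ρ i) f.continuous).trans (preimage_mono (hρ i))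

variable (ψ : PartitionOfUnity κ Y univ) {S : κ → Set Y} (φ : ∀ k, PartitionOfUnity ι (S k) univ)

open Classical in
noncomputable def glueTerm (k : κ) (i : ι) (y : Y) : ℝ :=
  if h : y ∈ S k then ψ k y * φ k i ⟨y, h⟩ else 0

theorem glueTerm_of_mem {k : κ} {i : ι} {y : Y} (h : y ∈ S k) :
    glueTerm ψ φ k i y = ψ k y * φ k i ⟨y, h⟩ :=
  dif_pos h

theorem glueTerm_of_notMem {k : κ} {i : ι} {y : Y} (h : y ∉ S k) : glueTerm ψ φ k i y = 0 :=
  dif_neg h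

theorem glueTerm_nonneg (k : κ) (i : ι) (y : Y) : 0 ≤ glueTerm ψ φ k i y := by
  by_cases h : y ∈ S k
  · rw [glueTerm_of_mem ψ φ h]
    exact mul_nonneg (ψ.nonneg k y) ((φ k).nonneg i _)
  · rw [glueTerm_of_notMem ψ φ h]

theorem support_glueTerm_subset (k : κ) (i : ι) :
    support (glueTerm ψ φ k i) ⊆ support (ψ k) ∩ (↑) '' support (φ k i) := by
  intro y hy
  by_cases h : y ∈ S k
  · rw [mem_support, glueTerm_of_mem ψ φ h] at hy
    exact ⟨left_ne_zero_of_mul hy, ⟨y, h⟩, right_ne_zero_of_mul hy, rfl⟩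
  · exact absurd (glueTerm_of_notMem ψ φ h) hy

variable {ψ}

theorem tsupport_glueTerm_subset (hψS : ∀ k, tsupport (ψ k) ⊆ S k) (k : κ) (i : ι) :
    tsupport (glueTerm ψ φ k i) ⊆ (↑) '' tsupport (φ k i) := by
  intro y hy
  have hyS : y ∈ S k :=
    hψS k (closure_mono (fun _ hz => (support_glueTerm_subset ψ φ k i hz).1) hy)
  exact ⟨⟨y, hyS⟩, closure_subtype.2
    (closure_mono (fun _ hz => (support_glueTerm_subset ψ φ k i hz).2) hy), rfl⟩

theorem continuous_glueTerm (hS : ∀ k, IsOpen (S k)) (hψS : ∀ k, tsupport (ψ k) ⊆ S k)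
    (k : κ) (i : ι) : Continuous (glueTerm ψ φ k i) := by
  refine ContinuousOn.continuous_of_tsupport_subset ?_ (hS k)
    ((tsupport_glueTerm_subset φ hψS k i).trans (image_subset_iff.2 fun _ _ => Subtype.prop _))
  rw [continuousOn_iff_continuous_domRestrict]
  have hres : (S k).domRestrict (glueTerm ψ φ k i) = fun z : S k => ψ k z * φ k i z :=
    funext fun z => glueTerm_of_mem ψ φ z.2
  rw [hres]
  exact ((ψ k).continuous.comp continuous_subtype_val).mul (φ k i).continuous

theorem locallyFinite_glueTerm (hS : ∀ k, IsOpen (S k)) (hψS : ∀ k, tsupport (ψ k) ⊆ S k)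
    (k : κ) : LocallyFinite fun i => support (glueTerm ψ φ k i) := by
  intro y
  by_cases h : y ∈ S k
  · obtain ⟨M, hM, hI⟩ := (φ k).locallyFinite ⟨y, h⟩
    refine ⟨(↑) '' M, (hS k).isOpenMap_subtype_val.image_mem_nhds hM, hI.subset ?_⟩
    rintro i ⟨_, hz, z, hzM, rfl⟩
    obtain ⟨-, z', hz', hzz'⟩ := support_glueTerm_subset ψ φ k i hz
    exact ⟨z, Subtype.val_injective hzz' ▸ hz', hzM⟩
  · refine ⟨(tsupport (ψ k))ᶜ, (isClosed_tsupport _).isOpen_compl.mem_nhds fun hy => h (hψS k hy),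
      finite_empty.subset fun i ⟨_, hz, hzψ⟩ =>
        hzψ (subset_tsupport _ (support_glueTerm_subset ψ φ k i hz).1)⟩

theorem locallyFinite_glueTerm_prod (hS : ∀ k, IsOpen (S k)) (hψS : ∀ k, tsupport (ψ k) ⊆ S k) :
    LocallyFinite fun p : κ × ι => support (glueTerm ψ φ p.1 p.2) :=
  ψ.locallyFinite.prod_of_subset (locallyFinite_glueTerm φ hS hψS) fun k i =>
    (support_glueTerm_subset ψ φ k i).trans inter_subset_left

theorem finsum_glueTerm (hψS : ∀ k, tsupport (ψ k) ⊆ S k) (k : κ) (y : Y) :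
    ∑ᶠ i, glueTerm ψ φ k i y = ψ k y := by
  by_cases h : y ∈ S k
  · rw [finsum_congr fun i => glueTerm_of_mem ψ φ h, ← mul_finsum, (φ k).sum_eq_one (mem_univ _),
      mul_one]
  · rw [finsum_eq_zero_of_forall_eq_zero fun i => glueTerm_of_notMem ψ φ h,
      image_eq_zero_of_notMem_tsupport fun hy => h (hψS k hy)]

theorem finsum_finsum_glueTerm (hS : ∀ k, IsOpen (S k)) (hψS : ∀ k, tsupport (ψ k) ⊆ S k)
    (y : Y) : ∑ᶠ i, ∑ᶠ k, glueTerm ψ φ k i y = ∑ᶠ k, ψ k y := by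
  rw [← finsum_comm_of_finite_support (f := fun k i => glueTerm ψ φ k i y)
    ((locallyFinite_glueTerm_prod φ hS hψS).point_finite y)]
  exact finsum_congr (finsum_glueTerm φ hψS · y)

noncomputable def glue (hS : ∀ k, IsOpen (S k)) (hψS : ∀ k, tsupport (ψ k) ⊆ S k) :
    PartitionOfUnity ι Y univ where
  toFun i := ⟨fun y => ∑ᶠ k, glueTerm ψ φ k i y, continuous_finsum
    (fun k => continuous_glueTerm φ hS hψS k i)
    ((locallyFinite_glueTerm_prod φ hS hψS).comp_injective (Prod.mk_left_injective i))⟩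
  locallyFinite' := (locallyFinite_glueTerm_prod φ hS hψS).iUnion_fst.subset fun i =>
    support_finsum_subset fun k => glueTerm ψ φ k i
  nonneg' i y := finsum_nonneg fun k => glueTerm_nonneg ψ φ k i y
  sum_eq_one' y _ := (finsum_finsum_glueTerm φ hS hψS y).trans (ψ.sum_eq_one (mem_univ y))
  sum_le_one' y := (finsum_finsum_glueTerm φ hS hψS y).trans_le (ψ.sum_le_one y)

theorem glue_isSubordinate (hS : ∀ k, IsOpen (S k)) (hψS : ∀ k, tsupport (ψ k) ⊆ S k)
    {U : ι → Set Y} (hφ : ∀ k, (φ k).IsSubordinate fun i => (↑) ⁻¹' U i) :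
    (glue φ hS hψS).IsSubordinate U := by
  intro i
  calc tsupport (glue φ hS hψS i) ⊆ closure (⋃ k, support (glueTerm ψ φ k i)) :=
        closure_mono (support_finsum_subset fun k => glueTerm ψ φ k i)
    _ = ⋃ k, tsupport (glueTerm ψ φ k i) :=
        ((locallyFinite_glueTerm_prod φ hS hψS).comp_injective
          (Prod.mk_left_injective i)).closure_iUnion
    _ ⊆ U i := iUnion_subset fun k =>
        (tsupport_glueTerm_subset φ hψS k i).trans (image_subset_iff.2 (hφ k i))

end PartitionOfUnity

theorem NumerablyParacompact.of_homeomorph {Y Z : Type u} [TopologicalSpace Y]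
    [TopologicalSpace Z] (e : Y ≃ₜ Z) (h : NumerablyParacompact Y) : NumerablyParacompact Z := by
  intro ι U hUo hUc
  obtain ⟨ρ, hρ⟩ := h ι (fun i => e ⁻¹' U i) (fun i => (hUo i).preimage e.continuous)
    (by rw [← preimage_iUnion, hUc, preimage_univ])
  refine ⟨ρ.comap e.symm, fun i z hz => ?_⟩
  simpa using hρ.comap (e.symm : C(Z, Y)) i hz

theorem HeredNumerablyParacompact.numerablyParacompact_of_isOpenEmbedding {Y Z : Type u}
    [TopologicalSpace Y] [TopologicalSpace Z] (h : HeredNumerablyParacompact Y) {f : Z → Y}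
    (hf : IsOpenEmbedding f) : NumerablyParacompact Z :=
  (h _ hf.isOpen_range).of_homeomorph hf.isEmbedding.toHomeomorph.symm

theorem HeredNumerablyParacompact.of_isOpenEmbedding {Y Z : Type u}
    [TopologicalSpace Y] [TopologicalSpace Z] (h : HeredNumerablyParacompact Y) {f : Z → Y}
    (hf : IsOpenEmbedding f) : HeredNumerablyParacompact Z := fun _ hV =>
  h.numerablyParacompact_of_isOpenEmbedding (hf.comp hV.isOpenEmbedding_subtypeVal)

theorem HeredNumerablyParacompact.of_locally {X : Type u} [TopologicalSpace X]
    (hX : NumerablyParacompact X)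
    (hloc : ∀ x : X, ∃ U : Set X, IsOpen U ∧ x ∈ U ∧ HeredNumerablyParacompact U) :
    HeredNumerablyParacompact X := by
  intro V hV ι U hUo hUc
  choose W hWo hWx hWh using hloc
  obtain ⟨ψ, hψ⟩ := hX X W hWo (eq_univ_of_forall fun x => mem_iUnion.2 ⟨x, hWx x⟩)
  let S x : Set V := (↑) ⁻¹' W x
  have hSo x : IsOpen (S x) := (hWo x).preimage continuous_subtype_val
  have hSW x : IsOpenEmbedding fun y : S x => (⟨y.1.1, y.2⟩ : W x) :=
    (IsOpenEmbedding.of_comp_iff _ (hWo x).isOpenEmbedding_subtypeVal).1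
      (hV.isOpenEmbedding_subtypeVal.comp (hSo x).isOpenEmbedding_subtypeVal)
  choose φ hφ using fun x => (hWh x).numerablyParacompact_of_isOpenEmbedding (hSW x) ι
    (fun i => (↑) ⁻¹' U i) (fun i => (hUo i).preimage continuous_subtype_val)
    (by rw [← preimage_iUnion, hUc, preimage_univ])
  have hψS := hψ.comap ⟨((↑) : V → X), continuous_subtype_val⟩
  exact ⟨PartitionOfUnity.glue φ hSo hψS, PartitionOfUnity.glue_isSubordinate φ hSo hψS hφ⟩

theorem stmt3_general (X : Type u) [TopologicalSpace X] :
    HeredNumerablyParacompact X ↔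
      NumerablyParacompact X ∧
        ∀ x : X, ∃ U : Set X, IsOpen U ∧ x ∈ U ∧ HeredNumerablyParacompact U := by
  refine ⟨fun h => ⟨h.numerablyParacompact_of_isOpenEmbedding .id, fun x => ?_⟩,
    fun ⟨hX, hloc⟩ => .of_locally hX hloc⟩
  exact ⟨univ, isOpen_univ, mem_univ x, h.of_isOpenEmbedding isOpen_univ.isOpenEmbedding_subtypeVal⟩

/-- Local-to-global criterion for hereditary numerable paracompactness of a `T₁` space. -/
theorem stmt3 (X : Type u) [TopologicalSpace X] [T1Space X] :
    HeredNumerablyParacompact X ↔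
      NumerablyParacompact X ∧
        ∀ x : X, ∃ U : Set X, IsOpen U ∧ x ∈ U ∧ HeredNumerablyParacompact U :=
  stmt3_general X
end

section
/- Let L : 𝒰 ⇄ 𝒱 : R be an adjunction between cartesian closed categories such that L preserves finite products. Then for every object U of 𝒰 and all objects X, Y of 𝒱 there is an isomorphism R(Y^{L U × X}) ≅ (R(Y^X))^U in 𝒰, natural in U, X and Y; in particular, taking X terminal, R(Y^{L U}) ≅ (R Y)^U naturally. -/
open CategoryTheory MonoidalCategory

universe v₁ v₂ u₁ u₂

/-!
Both sides are right adjoints in `Y`: the functor `Y ↦ R(Y^{LU ⊗ X})` has left adjoint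
`A ↦ (LU ⊗ X) ⊗ LA`, and `Y ↦ (R(Y^X))^U` has left adjoint `A ↦ X ⊗ L(U ⊗ A)`. A product-preserving
functor is strong monoidal, so its tensorator and the braiding identify these left adjoints, and
the isomorphism is the conjugate (mate) of that identification. Naturality in `X` and `U` holds
because conjugation is functorial, commutes with whiskering, and `pre` is itself the conjugate of
`tensoringLeft`.
-/

namespace CategoryTheory

open MonoidalClosed Functor.OplaxMonoidal

variable {𝒰 : Type u₁} {𝒱 : Type u₂} [Category.{v₁} 𝒰] [Category.{v₂} 𝒱]
  [MonoidalCategory 𝒰] [MonoidalCategory 𝒱] [BraidedCategory 𝒱]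

section TensorLeft

variable (L : 𝒰 ⥤ 𝒱) [L.Monoidal]

noncomputable def tensorLeftComparisonIso (U : 𝒰) (X : 𝒱) :
    tensorLeft U ⋙ L ⋙ tensorLeft X ≅ L ⋙ tensorLeft (L.obj U ⊗ X) :=
  NatIso.ofComponents
    (fun A => whiskerLeftIso X (Functor.Monoidal.μIso L U A).symm ≪≫
      (α_ X (L.obj U) (L.obj A)).symm ≪≫ whiskerRightIso (β_ X (L.obj U)) (L.obj A))
    (fun {A A'} f => by
      simp only [Functor.comp_map, curriedTensor_obj_map, Iso.trans_hom, whiskerLeftIso_hom,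
        Iso.symm_hom, Functor.Monoidal.μIso_inv, whiskerRightIso_hom, Category.assoc]
      rw [← whisker_exchange, ← associator_inv_naturality_right_assoc,
        ← MonoidalCategory.whiskerLeft_comp_assoc, ← δ_natural_right,
        MonoidalCategory.whiskerLeft_comp_assoc])

theorem tensorLeftComparisonIso_hom_app (U : 𝒰) (X : 𝒱) (A : 𝒰) :
    (tensorLeftComparisonIso L U X).hom.app A =
      X ◁ δ L U A ≫ (α_ X (L.obj U) (L.obj A)).inv ≫ (β_ X (L.obj U)).hom ▷ L.obj A :=
  rfl

theorem tensorLeftComparisonIso_hom_natural_whiskerLeft (U : 𝒰) {X X' : 𝒱} (g : X ⟶ X') :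
    (tensorLeftComparisonIso L U X).hom ≫
        Functor.whiskerLeft L ((tensoringLeft 𝒱).map (L.obj U ◁ g)) =
      Functor.whiskerLeft (tensorLeft U) (Functor.whiskerLeft L ((tensoringLeft 𝒱).map g)) ≫
        (tensorLeftComparisonIso L U X').hom := by
  ext A
  simp only [NatTrans.comp_app, tensorLeftComparisonIso_hom_app, Functor.whiskerLeft_app,
    curriedTensor_map_app, curriedTensor_obj_obj, Category.assoc]
  rw [← comp_whiskerRight, ← BraidedCategory.braiding_naturality_left, comp_whiskerRight,
    ← associator_inv_naturality_left_assoc, whisker_exchange_assoc]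

theorem tensorLeftComparisonIso_hom_natural_whiskerRight {U U' : 𝒰} (f : U ⟶ U') (X : 𝒱) :
    (tensorLeftComparisonIso L U X).hom ≫
        Functor.whiskerLeft L ((tensoringLeft 𝒱).map (L.map f ▷ X)) =
      Functor.whiskerRight ((tensoringLeft 𝒰).map f) (L ⋙ tensorLeft X) ≫
        (tensorLeftComparisonIso L U' X).hom := by
  ext A
  simp only [NatTrans.comp_app, tensorLeftComparisonIso_hom_app, Functor.whiskerLeft_app,
    Functor.whiskerRight_app, Functor.comp_map, curriedTensor_map_app, curriedTensor_obj_map,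
    Category.assoc]
  rw [← comp_whiskerRight, ← BraidedCategory.braiding_naturality_right, comp_whiskerRight,
    ← associator_inv_naturality_middle_assoc, ← MonoidalCategory.whiskerLeft_comp_assoc,
    δ_natural_left, MonoidalCategory.whiskerLeft_comp_assoc]

end TensorLeft

section Adjunction

variable [MonoidalClosed 𝒰] [MonoidalClosed 𝒱] {L : 𝒰 ⥤ 𝒱} {R : 𝒱 ⥤ 𝒰} [L.Monoidal]
  (adj : L ⊣ R)

noncomputable def ihomComparisonIso (U : 𝒰) (X : 𝒱) :
    ihom (L.obj U ⊗ X) ⋙ R ≅ (ihom X ⋙ R) ⋙ ihom U :=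
  conjugateIsoEquiv (adj.comp (ihom.adjunction _))
    ((ihom.adjunction U).comp (adj.comp (ihom.adjunction X))) (tensorLeftComparisonIso L U X)

theorem pre_whiskerLeft_comp_ihomComparisonIso_hom (U : 𝒰) {X X' : 𝒱} (g : X ⟶ X') :
    Functor.whiskerRight (pre (L.obj U ◁ g)) R ≫ (ihomComparisonIso adj U X).hom =
      (ihomComparisonIso adj U X').hom ≫
        Functor.whiskerRight (Functor.whiskerRight (pre g) R) (ihom U) := by
  rw [ihomComparisonIso, ihomComparisonIso, conjugateIsoEquiv_apply_hom,
    conjugateIsoEquiv_apply_hom, pre, pre, ← conjugateEquiv_whiskerLeft _ _ adj,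
    ← conjugateEquiv_whiskerLeft _ _ adj, ← conjugateEquiv_whiskerLeft _ _ (ihom.adjunction U),
    conjugateEquiv_comp, conjugateEquiv_comp, tensorLeftComparisonIso_hom_natural_whiskerLeft]

theorem pre_whiskerRight_comp_ihomComparisonIso_hom {U U' : 𝒰} (f : U ⟶ U') (X : 𝒱) :
    Functor.whiskerRight (pre (L.map f ▷ X)) R ≫ (ihomComparisonIso adj U X).hom =
      (ihomComparisonIso adj U' X).hom ≫ Functor.whiskerLeft (ihom X ⋙ R) (pre f) := by
  rw [ihomComparisonIso, ihomComparisonIso, conjugateIsoEquiv_apply_hom,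
    conjugateIsoEquiv_apply_hom, pre, pre, ← conjugateEquiv_whiskerLeft _ _ adj,
    ← conjugateEquiv_whiskerRight _ _ (adj.comp (ihom.adjunction X)),
    conjugateEquiv_comp, conjugateEquiv_comp, tensorLeftComparisonIso_hom_natural_whiskerRight]

noncomputable def ihomObjComparisonIso (U : 𝒰) : ihom (L.obj U) ⋙ R ≅ R ⋙ ihom U :=
  Functor.isoWhiskerRight (internalHom.mapIso (ρ_ (L.obj U)).op) R ≪≫
    ihomComparisonIso adj U (𝟙_ 𝒱) ≪≫
      Functor.isoWhiskerRight (Functor.isoWhiskerRight unitNatIso.symm R) (ihom U)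

end Adjunction

end CategoryTheory

/-- For an adjunction `L ⊣ R` between cartesian closed categories with `L` preserving
finite products, there are isomorphisms `R(Y^{LU × X}) ≅ (R(Y^X))^U`, natural in `U`, `X`
and `Y`; in particular `R(Y^{LU}) ≅ (R Y)^U`. -/
theorem stmt13 {𝒰 : Type u₁} {𝒱 : Type u₂} [Category.{v₁} 𝒰] [Category.{v₂} 𝒱]
    [CartesianMonoidalCategory 𝒰] [MonoidalClosed 𝒰]
    [CartesianMonoidalCategory 𝒱] [MonoidalClosed 𝒱]
    (L : 𝒰 ⥤ 𝒱) (R : 𝒱 ⥤ 𝒰) (adj : L ⊣ R) [Limits.PreservesFiniteProducts L] :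
    ∃ e : ∀ (U : 𝒰) (X Y : 𝒱),
        R.obj ((ihom (L.obj U ⊗ X)).obj Y) ≅ (ihom U).obj (R.obj ((ihom X).obj Y)),
      (∀ (U : 𝒰) (X Y Y' : 𝒱) (h : Y ⟶ Y'),
          R.map ((ihom (L.obj U ⊗ X)).map h) ≫ (e U X Y').hom =
            (e U X Y).hom ≫ (ihom U).map (R.map ((ihom X).map h))) ∧
      (∀ (U : 𝒰) (X X' : 𝒱) (g : X ⟶ X') (Y : 𝒱),
          R.map ((MonoidalClosed.pre (L.obj U ◁ g)).app Y) ≫ (e U X Y).hom =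
            (e U X' Y).hom ≫ (ihom U).map (R.map ((MonoidalClosed.pre g).app Y))) ∧
      (∀ (U U' : 𝒰) (f : U ⟶ U') (X Y : 𝒱),
          R.map ((MonoidalClosed.pre (L.map f ▷ X)).app Y) ≫ (e U X Y).hom =
            (e U' X Y).hom ≫ (MonoidalClosed.pre f).app (R.obj ((ihom X).obj Y))) ∧
      (∀ (U : 𝒰) (Y : 𝒱),
          Nonempty (R.obj ((ihom (L.obj U)).obj Y) ≅ (ihom U).obj (R.obj Y))) := by
  let : L.Monoidal := .ofChosenFiniteProducts L
  let : BraidedCategory 𝒱 := .ofCartesianMonoidalCategory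
  refine ⟨fun U X => (ihomComparisonIso adj U X).app, fun U X _ _ h => ?_,
    fun U _ _ g Y => ?_, fun _ _ f X Y => ?_, fun U Y => ⟨(ihomObjComparisonIso adj U).app Y⟩⟩
  · exact (ihomComparisonIso adj U X).hom.naturality h
  · exact NatTrans.congr_app (pre_whiskerLeft_comp_ihomComparisonIso_hom adj U g) Y
  · exact NatTrans.congr_app (pre_whiskerRight_comp_ihomComparisonIso_hom adj f X) Y
end

section
/- Let A be a subspace of a topological space X such that X × {0} ∪ A × [0,1] is a retract of X × [0,1]. Then for every topological space U, the subspace (X × U) × {0} ∪ (A × U) × [0,1] is a retract of (X × U) × [0,1]. -/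
open unitInterval

universe u v

/-- If `X × {0} ∪ A × I` is a retract of `X × I`, then for any space `U`,
`(X × U) × {0} ∪ (A × U) × I` is a retract of `(X × U) × I`. -/
theorem stmt15 {X : Type u} [TopologicalSpace X] (A : Set X)
    (h : ∃ r : C(X × I, X × I),
      (∀ p : X × I, (r p).2 = 0 ∨ (r p).1 ∈ A) ∧
      (∀ p : X × I, (p.2 = 0 ∨ p.1 ∈ A) → r p = p)) :
    ∀ (U : Type v) [TopologicalSpace U],
      ∃ r' : C((X × U) × I, (X × U) × I),
        (∀ p : (X × U) × I, (r' p).2 = 0 ∨ (r' p).1.1 ∈ A) ∧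
        (∀ p : (X × U) × I, (p.2 = 0 ∨ p.1.1 ∈ A) → r' p = p) := by
  obtain ⟨r, h1, h2⟩ := h
  intro U _
  refine ⟨⟨fun p => (((r (p.1.1, p.2)).1, p.1.2), (r (p.1.1, p.2)).2), by fun_prop⟩, ?_, ?_⟩
  · intro p
    rcases h1 (p.1.1, p.2) with h | h
    · exact Or.inl h
    · exact Or.inr h
  · intro p hp
    have := h2 (p.1.1, p.2) hp
    simp only [ContinuousMap.coe_mk, this]
end

section
/- Let X be a topological space such that for every open subset U ⊆ X, every open cover of U admits a subordinate continuous partition of unity. Then every subspace A ⊆ X, with the subspace topology, also has the property that every open cover of every open subset of A admits a subordinate continuous partition of unity. -/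
universe u

/-- The property that every open cover of every open subset admits a subordinate
(locally finite, continuous) partition of unity. -/
def HeredPOU (Y : Type u) [TopologicalSpace Y] : Prop :=
  ∀ U : Set Y, IsOpen U →
    ∀ (ι : Type u) (V : ι → Set U), (∀ i, IsOpen (V i)) → (⋃ i, V i) = Set.univ →
      ∃ f : PartitionOfUnity ι U Set.univ, f.IsSubordinate V

/-- Hereditary numerable paracompactness passes to arbitrary subspaces. -/
theorem stmt17 {X : Type u} [TopologicalSpace X] (hX : HeredPOU X) (A : Set X) :
    HeredPOU A := by
  intro U hU ι V hV hVcov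
  obtain ⟨W, hW, hWU⟩ := isOpen_induced_iff.mp hU
  choose T hT hTV using fun i => isOpen_induced_iff.mp (hV i)
  choose S hS hST using fun i => isOpen_induced_iff.mp (hT i)
  set W' : Set X := ⋃ i, S i ∩ W with hW'def
  have hW'open : IsOpen W' := isOpen_iUnion fun i => (hS i).inter hW
  set V' : ι → Set ↥W' := fun i => (Subtype.val : ↥W' → X) ⁻¹' (S i ∩ W) with hV'def
  have hV'open : ∀ i, IsOpen (V' i) := fun i =>
    ((hS i).inter hW).preimage continuous_subtype_val
  have hV'cov : (⋃ i, V' i) = Set.univ := by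
    ext x
    simp only [Set.mem_iUnion, Set.mem_univ, iff_true, hV'def, Set.mem_preimage]
    exact Set.mem_iUnion.mp x.2
  obtain ⟨f, hf⟩ := hX W' hW'open ι V' hV'open hV'cov
  have hmemSi : ∀ (u : ↥U) i, u ∈ V i → ((u : ↥A) : X) ∈ S i := by
    intro u i hu
    rw [← hTV i] at hu
    rw [← hST i] at hu
    exact hu
  have hmemW : ∀ u : ↥U, ((u : ↥A) : X) ∈ W := by
    intro u
    have h : (u : ↥A) ∈ Subtype.val ⁻¹' W := hWU.symm ▸ u.2
    exact h
  have hmemW' : ∀ u : ↥U, ((u : ↥A) : X) ∈ W' := by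
    intro u
    have hu : u ∈ ⋃ i, V i := by rw [hVcov]; trivial
    obtain ⟨i, hi⟩ := Set.mem_iUnion.mp hu
    exact Set.mem_iUnion.mpr ⟨i, hmemSi u i hi, hmemW u⟩
  let j : ↥U → ↥W' := fun u => ⟨((u : ↥A) : X), hmemW' u⟩
  have hj : Continuous j :=
    Continuous.subtype_mk (continuous_subtype_val.comp continuous_subtype_val) _
  refine ⟨⟨fun i => (f i).comp ⟨j, hj⟩, ?_, fun i x => f.nonneg i (j x),
      fun x _ => f.sum_eq_one (Set.mem_univ _), fun x => f.sum_le_one (j x)⟩, ?_⟩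
  · have heq : (fun i => Function.support ⇑((f i).comp ⟨j, hj⟩))
        = fun i => j ⁻¹' Function.support (f i) := by
      funext i; ext x; simp [Function.mem_support]
    rw [heq]
    exact f.locallyFinite.preimage_continuous hj
  · intro i x hx
    have hsub : tsupport (⇑((f i).comp ⟨j, hj⟩)) ⊆ j ⁻¹' tsupport (f i) := by
      apply closure_minimal ?_ (IsClosed.preimage hj isClosed_closure)
      intro y hy
      simp only [Set.mem_preimage]
      apply subset_closure
      simpa [Function.mem_support] using hy
    have h1 : j x ∈ V' i := hf i (hsub hx)
    have h2 : ((x : ↥A) : X) ∈ S i := h1.1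
    rw [← hTV i, Set.mem_preimage, ← hST i, Set.mem_preimage]
    exact h2
end

section
/- A subset A of ℝ^n is open if and only if for every infinitely differentiable curve c : ℝ → ℝ^n the preimage c⁻¹(A) is open in ℝ. Equivalently, the usual topology of ℝ^n is the final topology with respect to the family of all C^∞ curves ℝ → ℝ^n. -/
/-!
If `A` is not open, pick `x ∈ A` and points `y k ∉ A` with `‖y k - x‖` decaying faster than every
power of `k`. Let `bump k` equal `1` at `1 / (k + 1)` and be supported in a window of width
`~ 1 / k²` around it. The `m`-th derivative of `bump k t • (y k - x)` is `O(k^(2m) ‖y k - x‖)`,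
so `c t = x + ∑ₖ bump k t • (y k - x)` is smooth; as `c 0 = x` and `c (1 / (k + 1)) = y k`,
the preimage `c ⁻¹' A` is not a neighbourhood of `0`.
-/

open scoped ContDiff

open Filter Topology

lemma ContDiff.exists_bound_iteratedFDeriv_of_hasCompactSupport {E F : Type*}
    [NormedAddCommGroup E] [NormedSpace ℝ E] [NormedAddCommGroup F] [NormedSpace ℝ F] {f : E → F}
    {m : ℕ} (hf : ContDiff ℝ m f) (hsupp : HasCompactSupport f) :
    ∃ M, ∀ x, ‖iteratedFDeriv ℝ m f x‖ ≤ M :=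
  (hf.continuous_iteratedFDeriv le_rfl).bounded_above_of_compact_support
    (hsupp.iteratedFDeriv m)

lemma exists_seq_summable_pow_mul_norm_sub {E : Type*} [SeminormedAddCommGroup E] {s : Set E}
    {x : E} (hx : x ∈ closure s) {a : ℕ → ℝ} (ha : ∀ k, 1 ≤ a k) :
    ∃ y : ℕ → E, (∀ k, y k ∈ s) ∧ ∀ m : ℕ, Summable fun k => a k ^ m * ‖y k - x‖ := by
  have ha₀ k : 0 < a k := zero_lt_one.trans_le (ha k)
  have hδ k : 0 < (1 / 2) ^ k / a k ^ k := by have := ha₀ k; positivity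
  choose y hys hyx using fun k => Metric.mem_closure_iff.1 hx _ (hδ k)
  refine ⟨y, hys, fun m => .of_norm_bounded_eventually_nat
    (summable_geometric_of_lt_one (by norm_num) (by norm_num : (1 / 2 : ℝ) < 1)) ?_⟩
  filter_upwards [eventually_ge_atTop m] with k hk
  have hpow : a k ^ m ≤ a k ^ k := pow_le_pow_right₀ (ha k) hk
  rw [norm_mul, norm_norm, norm_pow, Real.norm_of_nonneg (ha₀ k).le, ← dist_eq_norm, dist_comm]
  calc a k ^ m * dist x (y k) ≤ a k ^ k * ((1 / 2) ^ k / a k ^ k) :=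
        mul_le_mul hpow (hyx k).le dist_nonneg (pow_nonneg (ha₀ k).le k)
    _ = (1 / 2) ^ k := mul_div_cancel₀ _ (pow_ne_zero k (ha₀ k).ne')

namespace SpecialCurve

noncomputable section

def node (k : ℕ) : ℝ := 1 / ((k : ℝ) + 1)

/-- `1 / scale k = node k - node (k + 1)`, so the bumps below have pairwise disjoint supports,
none of which contains `0`. -/
def scale (k : ℕ) : ℝ := ((k : ℝ) + 1) * ((k : ℝ) + 2)

def unitBump : ContDiffBump (0 : ℝ) := ⟨1 / 2, 1, by norm_num, by norm_num⟩

def bump (k : ℕ) (t : ℝ) : ℝ := unitBump (scale k * (t - node k))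

end

lemma one_le_scale (k : ℕ) : 1 ≤ scale k := by
  unfold scale; nlinarith [(k.cast_nonneg : (0 : ℝ) ≤ k)]

lemma unitBump_eq_zero {s : ℝ} (hs : 1 ≤ |s|) : unitBump s = 0 :=
  unitBump.zero_of_le_dist (by simpa [unitBump, Real.dist_eq] using hs)

lemma bump_node_self (k : ℕ) : bump k (node k) = 1 := by
  simp only [bump, sub_self, mul_zero]
  exact unitBump.one_of_mem_closedBall (Metric.mem_closedBall_self unitBump.rIn_pos.le)

lemma one_le_abs_scale_mul_node_sub {j k : ℕ} (hjk : j ≠ k) :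
    1 ≤ |scale j * (node k - node j)| := by
  have hK : (0 : ℝ) < k + 1 := by positivity
  have hval : scale j * (node k - node j) = ((j : ℝ) + 2) * (j - k) / (k + 1) := by
    simp only [scale, node]; field_simp; ring
  rw [hval, le_abs']
  rcases hjk.lt_or_gt with h | h
  · left
    have h' : (j : ℝ) + 1 ≤ k := mod_cast h
    rw [div_le_iff₀ hK]; nlinarith [(j.cast_nonneg : (0 : ℝ) ≤ j)]
  · right
    have h' : (k : ℝ) + 1 ≤ j := mod_cast h
    rw [le_div_iff₀ hK]; nlinarith [(k.cast_nonneg : (0 : ℝ) ≤ k)]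

lemma bump_node_of_ne {j k : ℕ} (hjk : j ≠ k) : bump j (node k) = 0 :=
  unitBump_eq_zero (one_le_abs_scale_mul_node_sub hjk)

lemma bump_zero (j : ℕ) : bump j 0 = 0 := by
  refine unitBump_eq_zero ?_
  have : scale j * (0 - node j) = -((j : ℝ) + 2) := by
    simp only [scale, node]; field_simp; ring
  rw [this, abs_neg, abs_of_pos (by positivity)]
  linarith [(j.cast_nonneg : (0 : ℝ) ≤ j)]

lemma contDiff_bump (k : ℕ) : ContDiff ℝ ∞ (bump k) :=
  unitBump.contDiff.comp (contDiff_const.mul (contDiff_id.sub contDiff_const))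

lemma iteratedDeriv_bump (k m : ℕ) (t : ℝ) :
    iteratedDeriv m (bump k) t =
      scale k ^ m * iteratedDeriv m unitBump (scale k * (t - node k)) := by
  change iteratedDeriv m (fun s => unitBump (scale k * (s - node k))) t = _
  have h := iteratedDeriv_comp_const_mul (n := m) (unitBump.contDiff (n := m)) (scale k)
  simpa only [h] using
    congrFun (iteratedDeriv_comp_sub_const m (fun u => unitBump (scale k * u)) (node k)) t

lemma exists_bound_iteratedDeriv_bump (m : ℕ) :
    ∃ M, ∀ k t, ‖iteratedDeriv m (bump k) t‖ ≤ scale k ^ m * M := by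
  obtain ⟨M, hM⟩ := unitBump.contDiff.exists_bound_iteratedFDeriv_of_hasCompactSupport
    unitBump.hasCompactSupport
  refine ⟨M, fun k t => ?_⟩
  have hscale : 0 ≤ scale k := zero_le_one.trans (one_le_scale k)
  rw [iteratedDeriv_bump, norm_mul, norm_pow, Real.norm_of_nonneg hscale,
    ← norm_iteratedFDeriv_eq_norm_iteratedDeriv]
  exact mul_le_mul_of_nonneg_left (hM _) (pow_nonneg hscale m)

variable {E : Type*} [NormedAddCommGroup E] [NormedSpace ℝ E] [CompleteSpace E]

lemma contDiff_tsum_bump_smul {v : ℕ → E} (hv : ∀ m : ℕ, Summable fun k => scale k ^ m * ‖v k‖) :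
    ContDiff ℝ ∞ fun t => ∑' k, bump k t • v k := by
  choose M hM using exists_bound_iteratedDeriv_bump
  refine contDiff_tsum (fun k => (contDiff_bump k).smul contDiff_const)
    (fun m _ => (hv m).mul_right (M m)) fun m k t _ => ?_
  rw [norm_iteratedFDeriv_eq_norm_iteratedDeriv,
    iteratedDeriv_smul_const ((contDiff_bump k).contDiffAt.of_le (mod_cast le_top)), norm_smul]
  calc ‖iteratedDeriv m (bump k) t‖ * ‖v k‖ ≤ scale k ^ m * M m * ‖v k‖ := by
        gcongr; exact hM m k t
    _ = scale k ^ m * ‖v k‖ * M m := by ring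

lemma exists_contDiff_curve_through (x : E) {y : ℕ → E}
    (hy : ∀ m : ℕ, Summable fun k => scale k ^ m * ‖y k - x‖) :
    ∃ c : ℝ → E, ContDiff ℝ ∞ c ∧ c 0 = x ∧ ∀ k, c (node k) = y k := by
  refine ⟨fun t => x + ∑' k, bump k t • (y k - x),
    contDiff_const.add (contDiff_tsum_bump_smul hy), by simp [bump_zero], fun k => ?_⟩
  beta_reduce
  rw [tsum_eq_single k fun j hj => by rw [bump_node_of_ne hj, zero_smul], bump_node_self,
    one_smul, add_sub_cancel]

end SpecialCurve

section FinalTopology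

variable {E : Type*} [NormedAddCommGroup E] [NormedSpace ℝ E] [CompleteSpace E]

open SpecialCurve in
theorem isOpen_of_forall_contDiff_isOpen_preimage {A : Set E}
    (hA : ∀ c : ℝ → E, ContDiff ℝ ∞ c → IsOpen (c ⁻¹' A)) : IsOpen A := by
  rw [← isClosed_compl_iff, ← closure_subset_iff_isClosed]
  intro x hx hxA
  obtain ⟨y, hyA, hy⟩ := exists_seq_summable_pow_mul_norm_sub hx one_le_scale
  obtain ⟨c, hc, hc0, hcy⟩ := exists_contDiff_curve_through x hy
  have hc0A : c ⁻¹' A ∈ 𝓝 0 := (hA c hc).mem_nhds (by rwa [Set.mem_preimage, hc0])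
  obtain ⟨k, hk⟩ := (tendsto_one_div_add_atTop_nhds_zero_nat.eventually hc0A).exists
  exact hyA k (hcy k ▸ hk)

theorem isOpen_iff_forall_contDiff_isOpen_preimage {A : Set E} :
    IsOpen A ↔ ∀ c : ℝ → E, ContDiff ℝ ∞ c → IsOpen (c ⁻¹' A) :=
  ⟨fun hA _ hc => hA.preimage hc.continuous, isOpen_of_forall_contDiff_isOpen_preimage⟩

end FinalTopology

/-- A subset of `ℝⁿ` is open iff its preimage under every smooth curve `ℝ → ℝⁿ` is open;
equivalently, the usual topology of `ℝⁿ` is the final topology for all smooth curves. -/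
theorem stmt19 (n : ℕ) :
    (∀ A : Set (Fin n → ℝ), IsOpen A ↔
      ∀ c : ℝ → Fin n → ℝ, ContDiff ℝ ∞ c → IsOpen (c ⁻¹' A)) ∧
    (inferInstance : TopologicalSpace (Fin n → ℝ)) =
      ⨆ c ∈ {c : ℝ → Fin n → ℝ | ContDiff ℝ ∞ c},
        TopologicalSpace.coinduced c inferInstance := by
  refine ⟨fun A => isOpen_iff_forall_contDiff_isOpen_preimage, ?_⟩
  ext A
  rw [isOpen_iff_forall_contDiff_isOpen_preimage]
  simp only [isOpen_iSup_iff, isOpen_coinduced, Set.mem_ofPred_eq]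
end
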